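/- arXiv:2009.14308 — 5 statements merged into one kernel-verified Lean document; each statement's English description precedes it below -/
import Mathlib

section
/- For vectors q_i, k_j in ℝ^D and priors α_j = exp(½ k_j·k_j)/Z (Z a normalizer), the posterior responsibility α_j·N(q_i | k_j, I) / ∑_{j'} α_{j'}·N(q_i | k_{j'}, I) of unit-variance Gaussian component j for data q_i equals the softmax weight exp(q_i·k_j) / ∑_{j'} exp(q_i·k_{j'}). -/
open Finset Real

/-! Completing the square, `-½‖q - k‖² = -½‖q‖² + ⟪q, k⟫ - ½‖k‖²`. The prior `exp (½‖k‖²)` cancels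
the last term; the first, like the normalisations `(2π)^(-D/2)` and `Z`, is the same for every
component and so cancels between numerator and denominator, leaving the softmax weights. -/

/-- Density of a Gaussian in `ℝ^D` with mean `μ` and identity covariance. -/
noncomputable def gaussDensity (D : ℕ) (x μ : EuclideanSpace ℝ (Fin D)) : ℝ :=
  (2 * Real.pi) ^ (-(D : ℝ) / 2) * Real.exp (-(1 / 2) * ‖x - μ‖ ^ 2)

theorem div_sum_mul_left_eq {ι K : Type*} [Field K] (s : Finset ι) (f : ι → K) {c : K}
    (hc : c ≠ 0) (j : ι) :
    c * f j / ∑ i ∈ s, c * f i = f j / ∑ i ∈ s, f i := by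
  rw [← mul_sum, mul_div_mul_left _ _ hc]

theorem exp_half_inner_self_mul_exp_neg_half_norm_sub_sq {F : Type*} [NormedAddCommGroup F]
    [InnerProductSpace ℝ F] (x μ : F) :
    exp ((1 / 2) * inner ℝ μ μ) * exp (-(1 / 2) * ‖x - μ‖ ^ 2)
      = exp (-(1 / 2) * ‖x‖ ^ 2) * exp (inner ℝ x μ) := by
  rw [← exp_add, ← exp_add, norm_sub_sq_real, real_inner_self_eq_norm_sq]
  ring_nf

theorem exp_half_inner_self_mul_gaussDensity (D : ℕ) (x μ : EuclideanSpace ℝ (Fin D)) :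
    exp ((1 / 2) * inner ℝ μ μ) * gaussDensity D x μ
      = (2 * π) ^ (-(D : ℝ) / 2) * exp (-(1 / 2) * ‖x‖ ^ 2) * exp (inner ℝ x μ) := by
  rw [gaussDensity, mul_left_comm, exp_half_inner_self_mul_exp_neg_half_norm_sub_sq, mul_assoc]

theorem gmm_responsibility_eq_softmax_general (S D : ℕ)
    (q : EuclideanSpace ℝ (Fin D)) (k : Fin S → EuclideanSpace ℝ (Fin D))
    (Z : ℝ) (hZ : Z = ∑ j, Real.exp ((1 / 2) * (inner ℝ (k j) (k j) : ℝ)))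
    (α : Fin S → ℝ)
    (hα : ∀ j, α j = Real.exp ((1 / 2) * (inner ℝ (k j) (k j) : ℝ)) / Z) (j : Fin S) :
    α j * gaussDensity D q (k j) / (∑ j', α j' * gaussDensity D q (k j'))
      = Real.exp (inner ℝ q (k j) : ℝ) / ∑ j', Real.exp (inner ℝ q (k j') : ℝ) := by
  set c := Z⁻¹ * ((2 * π) ^ (-(D : ℝ) / 2) * exp (-(1 / 2) * ‖q‖ ^ 2))
  have hZ_pos : 0 < Z := hZ ▸ sum_pos (fun _ _ ↦ exp_pos _) ⟨j, mem_univ j⟩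
  have hc : c ≠ 0 := by positivity
  have hα_mul : ∀ j', α j' * gaussDensity D q (k j') = c * exp (inner ℝ q (k j')) := fun j' ↦ by
    rw [hα, div_eq_inv_mul, mul_assoc, exp_half_inner_self_mul_gaussDensity, ← mul_assoc]
  simp only [hα_mul]
  exact div_sum_mul_left_eq univ (fun j' ↦ exp (inner ℝ q (k j'))) hc j

theorem gmm_responsibility_eq_softmax (S D : ℕ) (hS : 0 < S)
    (q : EuclideanSpace ℝ (Fin D)) (k : Fin S → EuclideanSpace ℝ (Fin D))
    (Z : ℝ) (hZ : Z = ∑ j, Real.exp ((1 / 2) * (inner ℝ (k j) (k j) : ℝ)))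
    (α : Fin S → ℝ)
    (hα : ∀ j, α j = Real.exp ((1 / 2) * (inner ℝ (k j) (k j) : ℝ)) / Z) (j : Fin S) :
    α j * gaussDensity D q (k j) / (∑ j', α j' * gaussDensity D q (k j'))
      = Real.exp (inner ℝ q (k j) : ℝ) / ∑ j', Real.exp (inner ℝ q (k j') : ℝ) :=
  gmm_responsibility_eq_softmax_general S D q k Z hZ α hα j
end

section
/- Let π^0 be a strictly positive S×S matrix and apply one step of column normalization followed by row normalization: ξ_{ij} = π^0_{ij}/∑_i π^0_{ij}, π_{ij} = ξ_{ij}/∑_j ξ_{ij}. Then π has all row sums equal to 1, and every column sum of π lies in the interval [1/S, S]. -/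
/-!
Column normalization makes every column of `ξ` sum to `1` with entries in `(0, 1]`, so every row
of `ξ` sums to at most `S`. Dividing row `i` by its sum `R i ≤ S` can therefore only enlarge its
entries relative to `ξ i j / S`, and summing over `i` gives column sums of `π` at least
`(∑ i, ξ i j) / S = 1 / S`. The upper bound `S` holds because every entry of a row-stochastic
matrix is at most `1`.
-/

open Finset

noncomputable section

variable {ι κ : Type*} {A : ι → κ → ℝ}

def colNormalize [Fintype ι] (A : ι → κ → ℝ) (i : ι) (j : κ) : ℝ := A i j / ∑ i', A i' j

def rowNormalize [Fintype κ] (A : ι → κ → ℝ) (i : ι) (j : κ) : ℝ := A i j / ∑ j', A i j'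

theorem colNormalize_pos [Fintype ι] (hA : ∀ i j, 0 < A i j) (i : ι) (j : κ) :
    0 < colNormalize A i j :=
  div_pos (hA i j) (sum_pos (fun i' _ ↦ hA i' j) ⟨i, mem_univ i⟩)

theorem colNormalize_le_one [Fintype ι] (hA : ∀ i j, 0 ≤ A i j) (i : ι) (j : κ) :
    colNormalize A i j ≤ 1 :=
  div_le_one_of_le₀ (single_le_sum (fun i' _ ↦ hA i' j) (mem_univ i))
    (sum_nonneg fun i' _ ↦ hA i' j)

theorem sum_colNormalize [Fintype ι] [Nonempty ι] (hA : ∀ i j, 0 < A i j) (j : κ) :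
    ∑ i, colNormalize A i j = 1 := by
  simp only [colNormalize, ← sum_div]
  exact div_self (sum_pos (fun i _ ↦ hA i j) univ_nonempty).ne'

theorem rowNormalize_le_one [Fintype κ] (hA : ∀ i j, 0 ≤ A i j) (i : ι) (j : κ) :
    rowNormalize A i j ≤ 1 :=
  div_le_one_of_le₀ (single_le_sum (fun j' _ ↦ hA i j') (mem_univ j))
    (sum_nonneg fun j' _ ↦ hA i j')

theorem sum_rowNormalize [Fintype κ] [Nonempty κ] (hA : ∀ i j, 0 < A i j) (i : ι) :
    ∑ j, rowNormalize A i j = 1 := by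
  simp only [rowNormalize, ← sum_div]
  exact div_self (sum_pos (fun j _ ↦ hA i j) univ_nonempty).ne'

theorem sum_rowNormalize_le_card [Fintype ι] [Fintype κ] (hA : ∀ i j, 0 ≤ A i j) (j : κ) :
    ∑ i, rowNormalize A i j ≤ Fintype.card ι := by
  simpa using sum_le_sum fun i (_ : i ∈ univ) ↦ rowNormalize_le_one hA i j

theorem sum_div_card_le_sum_rowNormalize [Fintype ι] [Fintype κ] (hA : ∀ i j, 0 < A i j)
    (hA₁ : ∀ i j, A i j ≤ 1) (j : κ) :
    (∑ i, A i j) / Fintype.card κ ≤ ∑ i, rowNormalize A i j := by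
  rw [sum_div]
  refine sum_le_sum fun i _ ↦ div_le_div_of_nonneg_left (hA i j).le
    (sum_pos (fun j' _ ↦ hA i j') ⟨j, mem_univ j⟩) ?_
  simpa using sum_le_sum fun j' (_ : j' ∈ univ) ↦ hA₁ i j'

end

theorem dnas_row_sums_one_and_column_sums_bounded_general (S : ℕ)
    (p0 : Fin S → Fin S → ℝ) (hpos : ∀ i j, 0 < p0 i j)
    (ξ : Fin S → Fin S → ℝ) (hξ : ∀ i j, ξ i j = p0 i j / ∑ i', p0 i' j)
    (p : Fin S → Fin S → ℝ) (hp : ∀ i j, p i j = ξ i j / ∑ j', ξ i j') :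
    (∀ i, ∑ j, p i j = 1) ∧
    ∀ j, (1 : ℝ) / S ≤ ∑ i, p i j ∧ ∑ i, p i j ≤ S := by
  obtain rfl : ξ = colNormalize p0 := funext₂ hξ
  obtain rfl : p = rowNormalize (colNormalize p0) := funext₂ hp
  have hξpos := colNormalize_pos hpos
  refine ⟨fun i ↦ ?_, fun j ↦ ⟨?_, ?_⟩⟩
  · have : Nonempty (Fin S) := ⟨i⟩
    exact sum_rowNormalize hξpos i
  · have : Nonempty (Fin S) := ⟨j⟩
    simpa [sum_colNormalize hpos j] using
      sum_div_card_le_sum_rowNormalize hξpos (colNormalize_le_one fun i j ↦ (hpos i j).le) j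
  · simpa using sum_rowNormalize_le_card (fun i j ↦ (hξpos i j).le) j

theorem dnas_row_sums_one_and_column_sums_bounded (S : ℕ) (hS : 0 < S)
    (p0 : Fin S → Fin S → ℝ) (hpos : ∀ i j, 0 < p0 i j)
    (ξ : Fin S → Fin S → ℝ) (hξ : ∀ i j, ξ i j = p0 i j / ∑ i', p0 i' j)
    (p : Fin S → Fin S → ℝ) (hp : ∀ i j, p i j = ξ i j / ∑ j', ξ i j') :
    (∀ i, ∑ j, p i j = 1) ∧
    ∀ j, (1 : ℝ) / S ≤ ∑ i, p i j ∧ ∑ i, p i j ≤ S :=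
  dnas_row_sums_one_and_column_sums_bounded_general S p0 hpos ξ hξ p hp
end

section
/- In the 1-D two-cluster model, the post-attention center distance under upper-normalized attention is d_U(r,s) = 2r(1−s²)a / ((1+rs)(r+s)), where r = N₀/N₁ > 0, s = exp(−2a²) ∈ (0,1), a > 0. Then 0 < d_U(r,s) < 2a, i.e., the distance between cluster centers strictly decreases after the attention update. -/
/-! The inter-cluster weight `s = exp (-2 a²)` lies strictly between `0` and `1`, which makes the
numerator `2 r (1 - s²) a` positive. For the upper bound, clearing the positive denominator leaves
`(1 + r s)(r + s) - r (1 - s²) = s (1 + r² + 2 r s) > 0`. -/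

open Real

/-- The post-attention distance `d_U(r, s)` of the two cluster centers, with `r = N₀ / N₁`. -/
noncomputable def upperNormalizedCenterDistance (r s a : ℝ) : ℝ :=
  2 * r * (1 - s ^ 2) * a / ((1 + r * s) * (r + s))

lemma exp_neg_two_mul_sq_lt_one {a : ℝ} (ha : a ≠ 0) : exp (-2 * a ^ 2) < 1 := by
  rw [exp_lt_one_iff]
  nlinarith [pow_pos (abs_pos.mpr ha) 2, sq_abs a]

lemma mul_one_sub_sq_lt_mul_add {r s : ℝ} (hr : 0 ≤ r) (hs : 0 < s) :
    r * (1 - s ^ 2) < (1 + r * s) * (r + s) := by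
  have key : (1 + r * s) * (r + s) - r * (1 - s ^ 2) = s * (1 + r ^ 2 + 2 * r * s) := by ring
  have : 0 < s * (1 + r ^ 2 + 2 * r * s) := by positivity
  linarith

section

variable {r s a : ℝ}

lemma upperNormalizedCenterDistance_pos (hr : 0 < r) (hs₀ : 0 < s) (hs₁ : s < 1) (ha : 0 < a) :
    0 < upperNormalizedCenterDistance r s a := by
  have : 0 < 1 - s ^ 2 := by nlinarith
  unfold upperNormalizedCenterDistance
  positivity

lemma upperNormalizedCenterDistance_lt (hr : 0 < r) (hs : 0 < s) (ha : 0 < a) :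
    upperNormalizedCenterDistance r s a < 2 * a := by
  have hden : 0 < (1 + r * s) * (r + s) := by positivity
  rw [upperNormalizedCenterDistance, div_lt_iff₀ hden]
  calc 2 * r * (1 - s ^ 2) * a = 2 * a * (r * (1 - s ^ 2)) := by ring
    _ < 2 * a * ((1 + r * s) * (r + s)) :=
      mul_lt_mul_of_pos_left (mul_one_sub_sq_lt_mul_add hr.le hs) (by positivity)

end

theorem unas_center_distance_strictly_decreases (a r s dU : ℝ)
    (ha : 0 < a) (hr : 0 < r) (hs : s = Real.exp (-2 * a ^ 2))
    (hdU : dU = 2 * r * (1 - s ^ 2) * a / ((1 + r * s) * (r + s))) :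
    0 < dU ∧ dU < 2 * a := by
  have hs₀ : 0 < s := hs ▸ exp_pos _
  have hs₁ : s < 1 := hs ▸ exp_neg_two_mul_sq_lt_one ha.ne'
  change dU = upperNormalizedCenterDistance r s a at hdU
  subst hdU
  exact ⟨upperNormalizedCenterDistance_pos hr hs₀ hs₁ ha, upperNormalizedCenterDistance_lt hr hs₀ ha⟩
end

section
/- With r > 0, 0 < s < 1, a > 0, and q = (r+s)/(rs+1), the doubly-normalized center distance d_D = 2qr(1−s²)a/((q+rs)(r+sq)) is greater than or equal to the upper-normalized center distance d_U = 2r(1−s²)a/((1+rs)(r+s)), with equality if and only if r = 1. -/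
/-!
Since `q (rs + 1) = r + s`, the doubly-normalized distance is the upper-normalized one scaled
by `(r + s)² / ((q + rs)(r + sq))`. Over the common denominator `(rs + 1)²`, the excess
`(r + s)² - (q + rs)(r + sq)` is the polynomial `s (1 - s) (r - 1)² (r + s (r² + r + 1))`,
which is nonnegative for `r > 0`, `0 < s < 1`, and vanishes exactly at `r = 1`.
-/

namespace TwoClusterAttention

def gap (r s : ℝ) : ℝ := s * (1 - s) * (r - 1) ^ 2 * (r + s * (r ^ 2 + r + 1))

lemma gap_nonneg {r s : ℝ} (hr : 0 ≤ r) (hs0 : 0 ≤ s) (hs1 : s ≤ 1) : 0 ≤ gap r s := by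
  have : 0 ≤ 1 - s := by linarith
  unfold gap
  positivity

lemma gap_eq_zero_iff {r s : ℝ} (hr : 0 < r) (hs0 : 0 < s) (hs1 : s < 1) :
    gap r s = 0 ↔ r = 1 := by
  have hfactor : r + s * (r ^ 2 + r + 1) ≠ 0 := by positivity
  simp [gap, hs0.ne', sub_ne_zero.mpr hs1.ne', hfactor, sub_eq_zero]

section

variable {r s q : ℝ}

lemma sq_sub_mul_eq_gap_div (hq : q * (r * s + 1) = r + s) (ht : r * s + 1 ≠ 0) :
    (r + s) ^ 2 - (q + r * s) * (r + s * q) = gap r s / (r * s + 1) ^ 2 := by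
  rw [eq_div_iff (pow_ne_zero 2 ht), gap]
  linear_combination
    (-(r * (r * s + 1) + r * s ^ 2 * (r * s + 1) + s * (q * (r * s + 1) + r + s))) * hq

lemma mul_div_sub_div_eq {c : ℝ} (hq : q * (r * s + 1) = r + s)
    (hD : (q + r * s) * (r + s * q) ≠ 0) (hrs : r + s ≠ 0) (ht : 1 + r * s ≠ 0) :
    c * q / ((q + r * s) * (r + s * q)) - c / ((1 + r * s) * (r + s)) =
      c / ((1 + r * s) * (r + s)) *
        (((r + s) ^ 2 - (q + r * s) * (r + s * q)) / ((q + r * s) * (r + s * q))) := by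
  have hscale : c * q / ((q + r * s) * (r + s * q)) =
      c / ((1 + r * s) * (r + s)) * ((r + s) ^ 2 / ((q + r * s) * (r + s * q))) := by
    rw [div_mul_div_comm, div_eq_div_iff hD (mul_ne_zero (mul_ne_zero ht hrs) hD)]
    linear_combination (c * (r + s) * ((q + r * s) * (r + s * q))) * hq
  rw [hscale, sub_div, div_self hD, mul_sub, mul_one]

end

end TwoClusterAttention

open TwoClusterAttention in
theorem dnas_center_distance_ge_unas (a r s q dD dU : ℝ)
    (ha : 0 < a) (hr : 0 < r) (hs0 : 0 < s) (hs1 : s < 1)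
    (hq : q = (r + s) / (r * s + 1))
    (hdD : dD = 2 * q * r * (1 - s ^ 2) * a / ((q + r * s) * (r + s * q)))
    (hdU : dU = 2 * r * (1 - s ^ 2) * a / ((1 + r * s) * (r + s))) :
    dU ≤ dD ∧ (dD = dU ↔ r = 1) := by
  have ht : 0 < r * s + 1 := by positivity
  have hq' : q * (r * s + 1) = r + s := by rw [hq, div_mul_cancel₀ _ ht.ne']
  have hD : 0 < (q + r * s) * (r + s * q) := by
    have : 0 < q := by rw [hq]; positivity
    positivity
  have hdU_pos : 0 < dU := by
    have : 0 < 1 - s ^ 2 := by nlinarith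
    rw [hdU]; positivity
  have hsub : dD - dU =
      dU * (((r + s) ^ 2 - (q + r * s) * (r + s * q)) / ((q + r * s) * (r + s * q))) := by
    have := mul_div_sub_div_eq (c := 2 * r * (1 - s ^ 2) * a) hq' hD.ne' (by positivity)
      (by positivity)
    rw [hdD, hdU, ← this]
    ring
  rw [sq_sub_mul_eq_gap_div hq' ht.ne'] at hsub
  constructor
  · rw [← sub_nonneg, hsub]
    have := gap_nonneg hr.le hs0.le hs1.le
    positivity
  · rw [← sub_eq_zero, hsub, ← gap_eq_zero_iff hr hs0 hs1]
    simp [hdU_pos.ne', hD.ne', ht.ne']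
end

section
/- If π_{ij} = u_i z_{ij} v_j and π'_{ij} = u'_i z_{ij} v'_j are two doubly stochastic matrices obtained as diagonal scalings of the same strictly positive matrix z by positive vectors, then π = π'. -/
/-!
Write `π'ᵢⱼ = πᵢⱼ rᵢ cⱼ` with `rᵢ = u'ᵢ / uᵢ` and `cⱼ = v'ⱼ / vⱼ`. Let `r` be maximal at `i₀` and
`c` minimal at `j₀`. Row `i₀` of `π'` is a `π`-weighted average of the numbers `r_{i₀} cⱼ`, all
at least `r_{i₀} c_{j₀}`, and column `j₀` is an average of the numbers `rᵢ c_{j₀}`, all at most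
`r_{i₀} c_{j₀}`. Both averages equal `1`, so `r_{i₀} c_{j₀} = 1`, and since the weights are
positive both averages are attained termwise: `r_{i₀} cⱼ = rᵢ c_{j₀} = 1`, whence `rᵢ cⱼ = 1`.
-/

open Finset

section WeightedAverage

variable {ι : Type*} [Fintype ι] {w f : ι → ℝ} {a : ℝ}

lemma sum_mul_le_of_forall_le (hw : ∀ i, 0 ≤ w i) (hw1 : ∑ i, w i = 1) (hf : ∀ i, f i ≤ a) :
    ∑ i, w i * f i ≤ a :=
  calc ∑ i, w i * f i ≤ ∑ i, w i * a :=
        sum_le_sum fun i _ => mul_le_mul_of_nonneg_left (hf i) (hw i)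
    _ = a := by rw [← sum_mul, hw1, one_mul]

lemma le_sum_mul_of_forall_le (hw : ∀ i, 0 ≤ w i) (hw1 : ∑ i, w i = 1) (hf : ∀ i, a ≤ f i) :
    a ≤ ∑ i, w i * f i := by
  have := sum_mul_le_of_forall_le (f := fun i => -f i) (a := -a) hw hw1 fun i => neg_le_neg (hf i)
  simp only [mul_neg, sum_neg_distrib] at this
  linarith

lemma eq_of_sum_mul_eq_of_forall_le (hw : ∀ i, 0 < w i) (hw1 : ∑ i, w i = 1) (hf : ∀ i, f i ≤ a)
    (h : ∑ i, w i * f i = a) (i : ι) : f i = a := by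
  have hmul : ∀ i ∈ univ, w i * f i ≤ w i * a := fun i _ =>
    mul_le_mul_of_nonneg_left (hf i) (hw i).le
  have hsum : ∑ i, w i * f i = ∑ i, w i * a := by rw [h, ← sum_mul, hw1, one_mul]
  exact mul_left_cancel₀ (hw i).ne' ((sum_eq_sum_iff_of_le hmul).1 hsum i (mem_univ i))

lemma eq_of_sum_mul_eq_of_forall_ge (hw : ∀ i, 0 < w i) (hw1 : ∑ i, w i = 1) (hf : ∀ i, a ≤ f i)
    (h : ∑ i, w i * f i = a) (i : ι) : f i = a := by
  have := eq_of_sum_mul_eq_of_forall_le (f := fun i => -f i) (a := -a) hw hw1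
    (fun i => neg_le_neg (hf i)) (by simp only [mul_neg, sum_neg_distrib, h]) i
  linarith

end WeightedAverage

theorem mul_eq_one_of_doublyStochastic_scaling {ι κ : Type*} [Fintype ι] [Fintype κ]
    [Nonempty ι] [Nonempty κ] {p : ι → κ → ℝ} (hp : ∀ i j, 0 < p i j)
    (hrow : ∀ i, ∑ j, p i j = 1) (hcol : ∀ j, ∑ i, p i j = 1)
    {r : ι → ℝ} {c : κ → ℝ} (hr : ∀ i, 0 ≤ r i) (hc : ∀ j, 0 ≤ c j)
    (hrow' : ∀ i, ∑ j, p i j * (r i * c j) = 1) (hcol' : ∀ j, ∑ i, p i j * (r i * c j) = 1)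
    (i : ι) (j : κ) : r i * c j = 1 := by
  obtain ⟨i₀, hi₀⟩ := Finite.exists_max r
  obtain ⟨j₀, hj₀⟩ := Finite.exists_min c
  have hrow_ge : ∀ j, r i₀ * c j₀ ≤ r i₀ * c j := fun j =>
    mul_le_mul_of_nonneg_left (hj₀ j) (hr i₀)
  have hcol_le : ∀ i, r i * c j₀ ≤ r i₀ * c j₀ := fun i =>
    mul_le_mul_of_nonneg_right (hi₀ i) (hc j₀)
  have hcorner : r i₀ * c j₀ = 1 := le_antisymm
    (hrow' i₀ ▸ le_sum_mul_of_forall_le (fun j => (hp i₀ j).le) (hrow i₀) hrow_ge)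
    (hcol' j₀ ▸ sum_mul_le_of_forall_le (fun i => (hp i j₀).le) (hcol j₀) hcol_le)
  have hcj : r i₀ * c j = 1 := hcorner ▸
    eq_of_sum_mul_eq_of_forall_ge (hp i₀) (hrow i₀) hrow_ge (hcorner ▸ hrow' i₀) j
  have hri : r i * c j₀ = 1 := hcorner ▸
    eq_of_sum_mul_eq_of_forall_le (fun i => hp i j₀) (hcol j₀) hcol_le (hcorner ▸ hcol' j₀) i
  calc r i * c j = r i * c j * (r i₀ * c j₀) := by rw [hcorner, mul_one]
    _ = (r i * c j₀) * (r i₀ * c j) := by ring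
    _ = 1 := by rw [hri, hcj, one_mul]

theorem sinkhorn_scaling_unique (S : ℕ) (hS : 0 < S)
    (z : Fin S → Fin S → ℝ) (hz : ∀ i j, 0 < z i j)
    (u v u' v' : Fin S → ℝ)
    (hu : ∀ i, 0 < u i) (hv : ∀ j, 0 < v j)
    (hu' : ∀ i, 0 < u' i) (hv' : ∀ j, 0 < v' j)
    (p p' : Fin S → Fin S → ℝ)
    (hp : ∀ i j, p i j = u i * z i j * v j)
    (hp' : ∀ i j, p' i j = u' i * z i j * v' j)
    (hprow : ∀ i, ∑ j, p i j = 1) (hpcol : ∀ j, ∑ i, p i j = 1)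
    (hprow' : ∀ i, ∑ j, p' i j = 1) (hpcol' : ∀ j, ∑ i, p' i j = 1) :
    p = p' := by
  have : NeZero S := ⟨hS.ne'⟩
  have hpos : ∀ i j, 0 < p i j := fun i j => hp i j ▸ mul_pos (mul_pos (hu i) (hz i j)) (hv j)
  have hscale : ∀ i j, p' i j = p i j * (u' i / u i * (v' j / v j)) := fun i j => by
    rw [hp, hp']
    field_simp [(hu i).ne', (hv j).ne']
  have hone := mul_eq_one_of_doublyStochastic_scaling hpos hprow hpcol
    (fun i => (div_pos (hu' i) (hu i)).le) (fun j => (div_pos (hv' j) (hv j)).le)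
    (fun i => by simpa only [hscale] using hprow' i)
    (fun j => by simpa only [hscale] using hpcol' j)
  funext i j
  rw [hscale, hone, mul_one]
end
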